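/- arXiv:2604.13524 — 2 statements merged into one kernel-verified Lean document; each statement's English description precedes it below -/
import Mathlib

section
/- Let ε ∈ [0,1), M > 1, and let 𝓟 and 𝓔 be nonempty sets of density matrices on ℂ^d such that T(𝓟,𝓔) := inf_{ρ∈𝓟, τ∈𝓔} T(ρ,τ) > ε. If there exists a linear map L from 2×2 complex matrices to d×d complex matrices such that L(π_{M′}) ∈ 𝓔 for every M′ ∈ [M,∞) and T(L(|1⟩⟨1|), ρ) ≤ ε for some ρ ∈ 𝓟, then M · diam(𝓔) ≥ T(𝓟,𝓔) − ε, where diam(𝓔) := sup_{τ,τ′∈𝓔} T(τ,τ′). -/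
open Matrix ComplexOrder

/-- Trace norm of a complex matrix: the trace of `sqrt(AᴴA)` (sum of singular values). -/
noncomputable def traceNorm {n : Type*} [Fintype n] [DecidableEq n]
    (A : Matrix n n ℂ) : ℝ :=
  (((Matrix.posSemidef_conjTranspose_mul_self A).1.eigenvectorUnitary.1 *
      Matrix.diagonal (((↑) : ℝ → ℂ) ∘ (fun x : ℝ => Real.sqrt x) ∘
        (Matrix.posSemidef_conjTranspose_mul_self A).1.eigenvalues) *
      (star (Matrix.posSemidef_conjTranspose_mul_self A).1.eigenvectorUnitary :
        Matrix n n ℂ)).trace).re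

/-- Trace distance `T(X,Y) = ‖X - Y‖₁ / 2`. -/
noncomputable def traceDist {n : Type*} [Fintype n] [DecidableEq n]
    (X Y : Matrix n n ℂ) : ℝ :=
  traceNorm (X - Y) / 2

/-- A density matrix: positive semidefinite with unit trace. -/
def IsDensityMatrix {n : Type*} [Fintype n] (ρ : Matrix n n ℂ) : Prop :=
  ρ.PosSemidef ∧ ρ.trace = 1

/-- The battery Gibbs state `π_M = diag(1 - 1/M, 1/M)`. -/
noncomputable def piM (M : ℝ) : Matrix (Fin 2) (Fin 2) ℂ :=
  Matrix.diagonal ![((1 - 1/M : ℝ) : ℂ), ((1/M : ℝ) : ℂ)]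

/-- The excited battery state `|1⟩⟨1| = diag(0,1)`. -/
def ket1 : Matrix (Fin 2) (Fin 2) ℂ :=
  Matrix.diagonal ![0, 1]

/-- A test (POVM effect): `0 ≤ E ≤ I`. -/
def IsTest {n : Type*} [Fintype n] [DecidableEq n] (E : Matrix n n ℂ) : Prop :=
  E.PosSemidef ∧ (1 - E).PosSemidef

/-- Choi matrix `Σ_{ij} E_{ij} ⊗ F(E_{ij})` of a linear map on matrices. -/
noncomputable def choiMatrix {n m : Type*} [Fintype n] [DecidableEq n] [Fintype m]
    (F : Matrix n n ℂ →ₗ[ℂ] Matrix m m ℂ) :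
    Matrix (n × m) (n × m) ℂ :=
  fun p q => F (Matrix.single p.1 q.1 1) p.2 q.2

/-- Completely positive (positive semidefinite Choi matrix) and trace preserving. -/
def IsCPTP {n m : Type*} [Fintype n] [DecidableEq n] [Fintype m]
    (F : Matrix n n ℂ →ₗ[ℂ] Matrix m m ℂ) : Prop :=
  (choiMatrix F).PosSemidef ∧ ∀ X, (F X).trace = X.trace

/-- `n`-fold Kronecker (tensor) power of a `2 × 2` matrix, indexed by bit strings. -/
def tensPow (A : Matrix (Fin 2) (Fin 2) ℂ) (n : ℕ) :
    Matrix (Fin n → Fin 2) (Fin n → Fin 2) ℂ :=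
  fun x y => ∏ i, A (x i) (y i)

/-- `ε`-ball (in trace distance) of density matrices around a set `𝓟`. -/
noncomputable def metBall {n : Type*} [Fintype n] [DecidableEq n]
    (ε : ℝ) (P : Set (Matrix n n ℂ)) : Set (Matrix n n ℂ) :=
  {ω | IsDensityMatrix ω ∧ ∃ ρ ∈ P, traceDist ω ρ ≤ ε}

/-!
For `M < M'` the Gibbs states satisfy `π_M - π_{M'} = w (|1⟩⟨1| - π_{M'})` with
`w = (1/M - 1/M') / (1 - 1/M')`, and `w → 1/M` as `M' → ∞`. Applying `L` and using the homogeneity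
of the trace norm, `T(L π_M, L π_{M'}) = |w| T(L |1⟩⟨1|, L π_{M'})`. Both states lie in `𝓔`, so
the left side is at most `diam 𝓔`, while by the triangle inequality through `ρ` the distance on the
right is at least `T(𝓟, 𝓔) - ε`. Letting `M' → ∞` gives `M diam 𝓔 ≥ T(𝓟, 𝓔) - ε`.

The triangle inequality for Hermitian matrices comes from `‖A‖₁ = Re tr (S A)` for the unitary
sign `S` of `A`, together with `Re tr (U A) ≤ ‖A‖₁` for every unitary `U`: in an eigenbasis of `A`
this is `∑ Re (Uᵢᵢ λᵢ)`, and the entries of a unitary have modulus at most `1`.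
-/

section TraceNorm

open scoped MatrixOrder

variable {n : Type*} [Fintype n] [DecidableEq n]

lemma traceNorm_eq_re_trace_cfc_sqrt (A : Matrix n n ℂ) :
    traceNorm A = (cfc Real.sqrt (Aᴴ * A)).trace.re := by
  rw [(posSemidef_conjTranspose_mul_self A).1.cfc_eq]
  rfl

lemma traceNorm_nonneg (A : Matrix n n ℂ) : 0 ≤ traceNorm A := by
  rw [traceNorm_eq_re_trace_cfc_sqrt]
  exact Complex.nonneg_iff.mp
    (cfc_nonneg fun x _ => Real.sqrt_nonneg x).posSemidef.trace_nonneg |>.1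

lemma traceNorm_smul (c : ℂ) (A : Matrix n n ℂ) : traceNorm (c • A) = ‖c‖ * traceNorm A := by
  have hA : IsSelfAdjoint (Aᴴ * A) := (posSemidef_conjTranspose_mul_self A).1
  have hcc : (c • A)ᴴ * (c • A) = (‖c‖ ^ 2) • (Aᴴ * A) := by
    rw [conjTranspose_smul, smul_mul_smul_comm, RCLike.star_def, Complex.conj_mul',
      ← Complex.ofReal_pow, Complex.coe_smul]
  have hsqrt : cfc Real.sqrt ((‖c‖ ^ 2) • (Aᴴ * A)) = ‖c‖ • cfc Real.sqrt (Aᴴ * A) := by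
    rw [← cfc_comp_smul (‖c‖ ^ 2) Real.sqrt (Aᴴ * A), ← cfc_const_mul ‖c‖ Real.sqrt (Aᴴ * A)]
    refine cfc_congr fun x _ => ?_
    simp only [smul_eq_mul, Real.sqrt_mul (sq_nonneg _), Real.sqrt_sq (norm_nonneg c)]
  rw [traceNorm_eq_re_trace_cfc_sqrt, traceNorm_eq_re_trace_cfc_sqrt, hcc, hsqrt, trace_smul,
    Complex.real_smul, Complex.re_ofReal_mul]

lemma _root_.Matrix.IsHermitian.trace_cfc {A : Matrix n n ℂ} (hA : A.IsHermitian) (f : ℝ → ℝ) :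
    (cfc f A).trace = ∑ i, (f (hA.eigenvalues i) : ℂ) := by
  rw [hA.cfc_eq, IsHermitian.cfc, Unitary.conjStarAlgAut_apply, trace_mul_cycle,
    Unitary.coe_star_mul_self, one_mul, trace_diagonal]
  rfl

variable {A : Matrix n n ℂ}

lemma _root_.Matrix.IsHermitian.traceNorm_eq_re_trace_cfc_abs (hA : A.IsHermitian) :
    traceNorm A = (cfc (fun x : ℝ => |x|) A).trace.re := by
  rw [traceNorm_eq_re_trace_cfc_sqrt, hA.eq, ← sq, ← cfc_comp_pow Real.sqrt 2 A]
  exact congrArg (fun X : Matrix n n ℂ => X.trace.re)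
    (cfc_congr fun x _ => Real.sqrt_sq_eq_abs x)

lemma _root_.Matrix.IsHermitian.traceNorm_eq_sum_abs_eigenvalues (hA : A.IsHermitian) :
    traceNorm A = ∑ i, |hA.eigenvalues i| := by
  rw [hA.traceNorm_eq_re_trace_cfc_abs, hA.trace_cfc, Complex.re_sum]
  simp only [Complex.ofReal_re]

lemma _root_.Matrix.PosSemidef.traceNorm_eq (hA : A.PosSemidef) : traceNorm A = A.trace.re := by
  rw [hA.1.traceNorm_eq_sum_abs_eigenvalues, hA.1.trace_eq_sum_eigenvalues, Complex.re_sum]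
  exact Finset.sum_congr rfl fun i _ => by simp [abs_of_nonneg (hA.eigenvalues_nonneg i)]

lemma re_trace_mul_le_traceNorm (hA : A.IsHermitian) {U : Matrix n n ℂ}
    (hU : U ∈ unitaryGroup n ℂ) : (U * A).trace.re ≤ traceNorm A := by
  set W : unitaryGroup n ℂ := hA.eigenvectorUnitary
  set X : Matrix n n ℂ := star (W : Matrix n n ℂ) * U * W
  have hX : X ∈ unitaryGroup n ℂ := mul_mem (mul_mem (Unitary.star_mem W.2) hU) W.2
  have htrace : (U * A).trace = ∑ i, X i i * (hA.eigenvalues i : ℂ) := by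
    conv_lhs => rw [hA.spectral_theorem, Unitary.conjStarAlgAut_apply]
    rw [← mul_assoc, ← mul_assoc, trace_mul_cycle, ← mul_assoc]
    simp [trace, mul_diagonal, X, W]
  rw [htrace, Complex.re_sum, hA.traceNorm_eq_sum_abs_eigenvalues]
  refine Finset.sum_le_sum fun i _ => ?_
  calc (X i i * (hA.eigenvalues i : ℂ)).re ≤ ‖X i i * (hA.eigenvalues i : ℂ)‖ :=
        Complex.re_le_norm _
    _ = ‖X i i‖ * |hA.eigenvalues i| := by rw [norm_mul, Complex.norm_real, Real.norm_eq_abs]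
    _ ≤ |hA.eigenvalues i| :=
        mul_le_of_le_one_left (abs_nonneg _) (entry_norm_bound_of_unitary hX i i)

lemma _root_.Matrix.IsHermitian.exists_unitary_traceNorm_eq (hA : A.IsHermitian) :
    ∃ U ∈ unitaryGroup n ℂ, traceNorm A = (U * A).trace.re := by
  set sgn : ℝ → ℝ := fun x => if 0 ≤ x then 1 else -1
  have hcont : ContinuousOn sgn (spectrum ℝ A) := A.finite_real_spectrum.continuousOn _
  have hsq : cfc sgn A * cfc sgn A = 1 := by
    rw [← cfc_mul sgn sgn A, ← cfc_one ℝ A]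
    exact cfc_congr fun x _ => by by_cases h : 0 ≤ x <;> simp [sgn, h]
  refine ⟨cfc sgn A, ?_, ?_⟩
  · rw [mem_unitaryGroup_iff, (cfc_predicate sgn A).star_eq, hsq]
  · have hmul : cfc sgn A * A = cfc (fun x => sgn x * x) A := by
      conv_lhs => enter [2]; rw [← cfc_id' ℝ A]
      rw [cfc_mul sgn (fun x => x) A]
    rw [hA.traceNorm_eq_re_trace_cfc_abs, hmul]
    congr 2
    exact cfc_congr fun x _ => by
      by_cases h : 0 ≤ x
      · simp [sgn, h, abs_of_nonneg h]
      · simp [sgn, h, abs_of_neg (not_le.mp h)]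

lemma traceNorm_add_le {B : Matrix n n ℂ} (hA : A.IsHermitian) (hB : B.IsHermitian) :
    traceNorm (A + B) ≤ traceNorm A + traceNorm B := by
  obtain ⟨U, hU, hAB⟩ := (hA.add hB).exists_unitary_traceNorm_eq
  rw [hAB, mul_add, trace_add, Complex.add_re]
  exact add_le_add (re_trace_mul_le_traceNorm hA hU) (re_trace_mul_le_traceNorm hB hU)

end TraceNorm

section TraceDist

variable {n : Type*} [Fintype n] [DecidableEq n]

lemma traceNorm_neg (A : Matrix n n ℂ) : traceNorm (-A) = traceNorm A := by
  rw [← neg_one_smul ℂ A, traceNorm_smul, norm_neg, norm_one, one_mul]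

lemma traceDist_nonneg (X Y : Matrix n n ℂ) : 0 ≤ traceDist X Y :=
  div_nonneg (traceNorm_nonneg _) zero_le_two

lemma traceDist_comm (X Y : Matrix n n ℂ) : traceDist X Y = traceDist Y X := by
  rw [traceDist, traceDist, ← neg_sub, traceNorm_neg]

lemma traceDist_triangle {X Y Z : Matrix n n ℂ} (hXY : (X - Y).IsHermitian)
    (hYZ : (Y - Z).IsHermitian) : traceDist X Z ≤ traceDist X Y + traceDist Y Z := by
  rw [traceDist, traceDist, traceDist, ← add_div, ← sub_add_sub_cancel X Y Z]
  gcongr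
  exact traceNorm_add_le hXY hYZ

lemma IsDensityMatrix.traceNorm_eq_one {ρ : Matrix n n ℂ} (hρ : IsDensityMatrix ρ) :
    traceNorm ρ = 1 := by
  rw [hρ.1.traceNorm_eq, hρ.2, Complex.one_re]

lemma IsDensityMatrix.traceDist_le_one {ρ σ : Matrix n n ℂ} (hρ : IsDensityMatrix ρ)
    (hσ : IsDensityMatrix σ) : traceDist ρ σ ≤ 1 := by
  have h := traceNorm_add_le hρ.1.1 hσ.1.1.neg
  rw [traceNorm_neg, hρ.traceNorm_eq_one, hσ.traceNorm_eq_one, ← sub_eq_add_neg] at h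
  rw [traceDist]
  linarith

noncomputable def traceDistInf (P E : Set (Matrix n n ℂ)) : ℝ :=
  sInf {r : ℝ | ∃ ρ ∈ P, ∃ τ ∈ E, r = traceDist ρ τ}

noncomputable def traceDiam (E : Set (Matrix n n ℂ)) : ℝ :=
  sSup {r : ℝ | ∃ τ ∈ E, ∃ τ' ∈ E, r = traceDist τ τ'}

lemma traceDistInf_le {P E : Set (Matrix n n ℂ)} {ρ τ : Matrix n n ℂ} (hρ : ρ ∈ P) (hτ : τ ∈ E) :
    traceDistInf P E ≤ traceDist ρ τ :=
  csInf_le ⟨0, by rintro _ ⟨ρ, -, τ, -, rfl⟩; exact traceDist_nonneg ρ τ⟩ ⟨ρ, hρ, τ, hτ, rfl⟩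

lemma traceDist_le_traceDiam {E : Set (Matrix n n ℂ)} (hE : ∀ τ ∈ E, IsDensityMatrix τ)
    {τ τ' : Matrix n n ℂ} (hτ : τ ∈ E) (hτ' : τ' ∈ E) : traceDist τ τ' ≤ traceDiam E :=
  le_csSup ⟨1, by rintro _ ⟨τ, hτ, τ', hτ', rfl⟩; exact (hE τ hτ).traceDist_le_one (hE τ' hτ')⟩
    ⟨τ, hτ, τ', hτ', rfl⟩

end TraceDist

section Gibbs

open Filter Topology

noncomputable def mixWeight (M M' : ℝ) : ℝ := (M⁻¹ - M'⁻¹) / (1 - M'⁻¹)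

lemma piM_sub_piM {M' : ℝ} (M : ℝ) (hM' : M' ≠ 1) :
    piM M - piM M' = (mixWeight M M' : ℂ) • (ket1 - piM M') := by
  have h : 1 - M'⁻¹ ≠ 0 := sub_ne_zero.mpr (by simpa [eq_comm] using hM')
  have hw : (mixWeight M M' : ℂ) * (1 - (M' : ℂ)⁻¹) = (M : ℂ)⁻¹ - (M' : ℂ)⁻¹ := by
    exact_mod_cast div_mul_cancel₀ (M⁻¹ - M'⁻¹) h
  ext i j
  fin_cases i <;> fin_cases j <;>
    simp only [piM, ket1, one_div, Complex.ofReal_sub, Complex.ofReal_one, Complex.ofReal_inv,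
      Matrix.sub_apply, Matrix.smul_apply, smul_eq_mul, Fin.zero_eta, Fin.mk_one, Fin.isValue,
      diagonal_apply_eq, diagonal_apply_ne, ne_eq, zero_ne_one, one_ne_zero, not_false_eq_true,
      cons_val_zero, cons_val_one, cons_val_fin_one, sub_self, mul_zero]
  · linear_combination hw
  · linear_combination -hw

lemma mixWeight_ne_zero {M M' : ℝ} (hMM' : M ≠ M') (hM' : M' ≠ 1) : mixWeight M M' ≠ 0 := by
  have h : 1 - M'⁻¹ ≠ 0 := sub_ne_zero.mpr (by simpa [eq_comm] using hM')
  exact div_ne_zero (sub_ne_zero.mpr (inv_injective.ne hMM')) h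

lemma tendsto_mixWeight_atTop (M : ℝ) : Tendsto (mixWeight M) atTop (𝓝 M⁻¹) := by
  have h := ((tendsto_const_nhds (x := M⁻¹)).sub tendsto_inv_atTop_zero).div
    ((tendsto_const_nhds (x := (1 : ℝ))).sub tendsto_inv_atTop_zero) (by norm_num)
  rwa [sub_zero, sub_zero, div_one] at h

end Gibbs

lemma abs_mixWeight_mul_le_traceDiam {n : Type*} [Fintype n] [DecidableEq n]
    {𝓟 𝓔 : Set (Matrix n n ℂ)} (h𝓔 : ∀ τ ∈ 𝓔, IsDensityMatrix τ)
    {L : Matrix (Fin 2) (Fin 2) ℂ →ₗ[ℂ] Matrix n n ℂ} {M M' ε : ℝ}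
    (hM : L (piM M) ∈ 𝓔) (hM' : L (piM M') ∈ 𝓔) (hMM' : M ≠ M') (hM'1 : M' ≠ 1)
    {ρ : Matrix n n ℂ} (hρ : ρ ∈ 𝓟) (hρH : ρ.IsHermitian) (hκρ : traceDist (L ket1) ρ ≤ ε) :
    |mixWeight M M'| * (traceDistInf 𝓟 𝓔 - ε) ≤ traceDiam 𝓔 := by
  set w := mixWeight M M'
  set κ := L ket1
  set τ' := L (piM M')
  have hdiff : L (piM M) - τ' = (w : ℂ) • (κ - τ') := by
    rw [← map_sub, piM_sub_piM M hM'1, map_smul, map_sub]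
  have hκτ' : (κ - τ').IsHermitian := by
    have hw : (w : ℂ) ≠ 0 := Complex.ofReal_ne_zero.mpr (mixWeight_ne_zero hMM' hM'1)
    rw [← inv_smul_smul₀ hw (κ - τ'), ← hdiff]
    exact ((h𝓔 _ hM).1.1.sub (h𝓔 _ hM').1.1).smul (by simp [IsSelfAdjoint, ← Complex.ofReal_inv])
  have hρκ : (ρ - κ).IsHermitian := by
    simpa using hρH.sub (h𝓔 _ hM').1.1 |>.sub hκτ'
  calc |w| * (traceDistInf 𝓟 𝓔 - ε)
      ≤ |w| * traceDist κ τ' := by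
        have := traceDist_triangle hρκ hκτ'
        have := traceDistInf_le hρ hM'
        rw [traceDist_comm] at hκρ
        gcongr
        linarith
    _ = traceDist (L (piM M)) τ' := by
        rw [traceDist, traceDist, hdiff, traceNorm_smul, Complex.norm_real, Real.norm_eq_abs,
          mul_div_assoc]
    _ ≤ traceDiam 𝓔 := traceDist_le_traceDiam h𝓔 hM hM'

theorem stmt_11_general {d : ℕ} (ε M : ℝ) (hM : 1 < M)
    (𝓟 𝓔 : Set (Matrix (Fin d) (Fin d) ℂ))
    (h𝓟 : ∀ ρ ∈ 𝓟, IsDensityMatrix ρ) (h𝓔 : ∀ τ ∈ 𝓔, IsDensityMatrix τ)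
    (L : Matrix (Fin 2) (Fin 2) ℂ →ₗ[ℂ] Matrix (Fin d) (Fin d) ℂ)
    (hL𝓔 : ∀ M' : ℝ, M ≤ M' → L (piM M') ∈ 𝓔)
    (hL𝓟 : ∃ ρ ∈ 𝓟, traceDist (L ket1) ρ ≤ ε) :
    M * sSup {r : ℝ | ∃ τ ∈ 𝓔, ∃ τ' ∈ 𝓔, r = traceDist τ τ'} ≥
      sInf {r : ℝ | ∃ ρ ∈ 𝓟, ∃ τ ∈ 𝓔, r = traceDist ρ τ} - ε := by
  change traceDistInf 𝓟 𝓔 - ε ≤ M * traceDiam 𝓔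
  obtain ⟨ρ, hρ, hκρ⟩ := hL𝓟
  have hM0 : 0 < M := zero_lt_one.trans hM
  have hbound : ∀ᶠ M' in Filter.atTop, |mixWeight M M'| * (traceDistInf 𝓟 𝓔 - ε) ≤ traceDiam 𝓔 := by
    filter_upwards [Filter.eventually_gt_atTop M] with M' hM'
    exact abs_mixWeight_mul_le_traceDiam h𝓔 (hL𝓔 M le_rfl) (hL𝓔 M' hM'.le) hM'.ne
      (hM.trans hM').ne' hρ (h𝓟 ρ hρ).1.1 hκρ
  have hlim := le_of_tendsto ((tendsto_mixWeight_atTop M).abs.mul_const _) hbound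
  rwa [abs_of_pos (inv_pos.mpr hM0), inv_mul_le_iff₀ hM0] at hlim

/-- geometric lower bound on the work cost from a dirty battery:
`M · diam(𝓔) ≥ T(𝓟,𝓔) - ε` for any feasible Gibbs-preserving linear map. -/
theorem stmt_11 {d : ℕ} (ε M : ℝ) (hε : ε ∈ Set.Ico (0:ℝ) 1) (hM : 1 < M)
    (𝓟 𝓔 : Set (Matrix (Fin d) (Fin d) ℂ))
    (h𝓟ne : 𝓟.Nonempty) (h𝓔ne : 𝓔.Nonempty)
    (h𝓟 : ∀ ρ ∈ 𝓟, IsDensityMatrix ρ) (h𝓔 : ∀ τ ∈ 𝓔, IsDensityMatrix τ)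
    (hsep : ε < sInf {r : ℝ | ∃ ρ ∈ 𝓟, ∃ τ ∈ 𝓔, r = traceDist ρ τ})
    (L : Matrix (Fin 2) (Fin 2) ℂ →ₗ[ℂ] Matrix (Fin d) (Fin d) ℂ)
    (hL𝓔 : ∀ M' : ℝ, M ≤ M' → L (piM M') ∈ 𝓔)
    (hL𝓟 : ∃ ρ ∈ 𝓟, traceDist (L ket1) ρ ≤ ε) :
    M * sSup {r : ℝ | ∃ τ ∈ 𝓔, ∃ τ' ∈ 𝓔, r = traceDist τ τ'} ≥
      sInf {r : ℝ | ∃ ρ ∈ 𝓟, ∃ τ ∈ 𝓔, r = traceDist ρ τ} - ε :=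
  stmt_11_general ε M hM 𝓟 𝓔 h𝓟 h𝓔 L hL𝓔 hL𝓟
end

section
/- Let n ≥ 2 be an integer, δ > 0, M₀ ∈ [2, 2+δ], let ω be a 2^n×2^n complex matrix, and let λ > 0. Suppose that for every p ∈ (0, λ] there exists M(p) ∈ [2, 2+δ] such that (1−p)·π_{M₀}^{⊗n} + p·ω = π_{M(p)}^{⊗n}. Then ω = π_{M₀}^{⊗n}. -/
open Matrix ComplexOrder

/-
The diagonal of `π_M^{⊗n}` is the product Bernoulli distribution with parameter `u = 1/M`: the
entry at a bit string with `k` ones is `f_u(k) = u^k (1-u)^(n-k)`, a geometric sequence in `k`.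
Taking `p = λ` and `p = λ/2`, the point `π_{M(λ/2)}^{⊗n}` is the midpoint of `π_{M₀}^{⊗n}` and
`π_{M(λ)}^{⊗n}`, so `g = f_u + f_v = 2 f_w` is again geometric: `g(0) g(2) = g(1)^2`.
But `g(0) g(2) - g(1)^2 = (1-u)^(n-2) (1-v)^(n-2) ((1-u) v - (1-v) u)^2`, which forces `u = v`,
hence `M(λ) = M₀`, and then `(1-λ) π_{M₀}^{⊗n} + λ ω = π_{M₀}^{⊗n}` gives `ω = π_{M₀}^{⊗n}`.
-/

theorem eq_of_add_bernoulli_eq_two_mul_bernoulli {n : ℕ} (hn : 2 ≤ n) {u v w : ℝ}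
    (hu : u ≠ 1) (hv : v ≠ 1)
    (h : ∀ k ≤ n, u ^ k * (1 - u) ^ (n - k) + v ^ k * (1 - v) ^ (n - k)
      = 2 * (w ^ k * (1 - w) ^ (n - k))) :
    u = v := by
  obtain ⟨m, rfl⟩ : ∃ m, n = m + 2 := ⟨n - 2, by omega⟩
  have h₀ := h 0 (by omega)
  have h₁ := h 1 (by omega)
  have h₂ := h 2 (by omega)
  simp only [pow_zero, one_mul, pow_one, Nat.sub_zero, Nat.add_sub_cancel,
    show m + 2 - 1 = m + 1 by omega] at h₀ h₁ h₂
  have hsq : (1 - u) ^ m * (1 - v) ^ m * ((1 - u) * v - (1 - v) * u) ^ 2 = 0 := by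
    linear_combination (u ^ 2 * (1 - u) ^ m + v ^ 2 * (1 - v) ^ m) * h₀
      + 2 * (1 - w) ^ (m + 2) * h₂
      - (u * (1 - u) ^ (m + 1) + v * (1 - v) ^ (m + 1) + 2 * (w * (1 - w) ^ (m + 1))) * h₁
  have hu' : (1 - u) ^ m ≠ 0 := pow_ne_zero _ (sub_ne_zero.mpr hu.symm)
  have hv' : (1 - v) ^ m ≠ 0 := pow_ne_zero _ (sub_ne_zero.mpr hv.symm)
  have hcross : (1 - u) * v = (1 - v) * u := by
    simpa [hu', hv', sub_eq_zero] using hsq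
  linarith

theorem exists_tensPow_apply_self_eq (N : ℕ) {k : ℕ} (hk : k ≤ N) :
    ∃ x : Fin N → Fin 2, ∀ A : Matrix (Fin 2) (Fin 2) ℂ,
      tensPow A N x x = A 1 1 ^ k * A 0 0 ^ (N - k) := by
  obtain ⟨s, -, hs⟩ :=
    Finset.exists_subset_card_eq (s := (Finset.univ : Finset (Fin N))) (by simpa using hk)
  refine ⟨fun i => if i ∈ s then 1 else 0, fun A => ?_⟩
  have hA : ∀ i, A (if i ∈ s then 1 else 0) (if i ∈ s then 1 else 0)
      = if i ∈ s then A 1 1 else A 0 0 := fun i => by split <;> rfl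
  simp only [tensPow, hA, Finset.prod_ite, Finset.prod_const, Finset.filter_mem_eq_inter,
    Finset.univ_inter, hs, Finset.filter_notMem_eq_sdiff, Finset.card_univ_sdiff, Fintype.card_fin]

theorem eq_of_tensPow_piM_add_eq_two_smul {n : ℕ} (hn : 2 ≤ n) {M₀ M₁ M₂ : ℝ}
    (h₀ : M₀ ≠ 1) (h₁ : M₁ ≠ 1)
    (h : tensPow (piM M₀) n + tensPow (piM M₁) n = (2 : ℝ) • tensPow (piM M₂) n) :
    M₀ = M₁ := by
  suffices 1 / M₀ = 1 / M₁ by simpa using this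
  refine eq_of_add_bernoulli_eq_two_mul_bernoulli hn (w := 1 / M₂)
    (by simpa using h₀) (by simpa using h₁) fun k hk => ?_
  obtain ⟨x, hx⟩ := exists_tensPow_apply_self_eq n hk
  have hxx := congrFun (congrFun h x) x
  simp only [Matrix.add_apply, Matrix.smul_apply, hx, piM, Matrix.diagonal_apply_eq,
    Matrix.cons_val_zero, Matrix.cons_val_one, Complex.real_smul] at hxx
  exact_mod_cast hxx

theorem stmt_17_general (n : ℕ) (hn : 2 ≤ n) (δ : ℝ)
    (M₀ : ℝ) (hM₀ : M₀ ∈ Set.Icc (2:ℝ) (2 + δ))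
    (ω : Matrix (Fin n → Fin 2) (Fin n → Fin 2) ℂ)
    (lam : ℝ) (hlam : 0 < lam)
    (h : ∀ p ∈ Set.Ioc (0:ℝ) lam, ∃ Mp ∈ Set.Icc (2:ℝ) (2 + δ),
      (1 - p) • tensPow (piM M₀) n + p • ω = tensPow (piM Mp) n) :
    ω = tensPow (piM M₀) n := by
  obtain ⟨M₁, hM₁, e₁⟩ := h lam ⟨hlam, le_rfl⟩
  obtain ⟨M₂, -, e₂⟩ := h (lam / 2) ⟨by linarith, by linarith⟩
  have hmid : tensPow (piM M₀) n + tensPow (piM M₁) n = (2 : ℝ) • tensPow (piM M₂) n := by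
    rw [← e₁, ← e₂]; module
  obtain rfl : M₀ = M₁ := eq_of_tensPow_piM_add_eq_two_smul hn
    (ne_of_gt (by linarith [hM₀.1])) (ne_of_gt (by linarith [hM₁.1])) hmid
  rw [← AffineMap.lineMap_apply_module, AffineMap.lineMap_eq_left_iff] at e₁
  exact (e₁.resolve_right hlam.ne').symm

/-- the set `{π_M^{⊗n} : M ∈ [2,2+δ]}` contains no non-degenerate
line segment anchored at one of its points, for `n ≥ 2`. -/
theorem stmt_17 (n : ℕ) (hn : 2 ≤ n) (δ : ℝ) (hδ : 0 < δ)
    (M₀ : ℝ) (hM₀ : M₀ ∈ Set.Icc (2:ℝ) (2 + δ))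
    (ω : Matrix (Fin n → Fin 2) (Fin n → Fin 2) ℂ)
    (lam : ℝ) (hlam : 0 < lam)
    (h : ∀ p ∈ Set.Ioc (0:ℝ) lam, ∃ Mp ∈ Set.Icc (2:ℝ) (2 + δ),
      (1 - p) • tensPow (piM M₀) n + p • ω = tensPow (piM Mp) n) :
    ω = tensPow (piM M₀) n :=
  stmt_17_general n hn δ M₀ hM₀ ω lam hlam h
end
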